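/- Let H and M be self-adjoint with ‖H − M‖ ≤ η and let 𝒫_α, 𝒫̃_α be the Gaussian-averaged unitary groups generated by H and M respectively. If additionally H has unique ground state with gap γ and ground state projection P₀, then ‖𝒫̃_α − P₀‖ ≤ η/√(απ) + e^{−γ²/(4α)}. -/

import Mathlib

/-!
By Duhamel's formula `‖e^{itM} - e^{itH}‖ ≤ |t| ‖M - H‖`, and the weight `√(α/π) e^{-αt²}` has
first absolute moment `1/√(απ)`, so `‖𝒫̃_α - 𝒫_α‖ ≤ η/√(απ)`. On an eigenvector of `H` with
eigenvalue `μ`, `𝒫_α` acts by the Fourier transform of the Gaussian, `e^{-μ²/(4α)}`. Hence in an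
orthonormal eigenbasis of `H` the operator `𝒫_α - P₀` is diagonal, with entry `0` on the ground
state and entries at most `e^{-γ²/(4α)}` on the excited states.
-/

open MeasureTheory NormedSpace Complex
open scoped InnerProductSpace

lemma integrable_abs_mul_exp_neg_mul_sq {α : ℝ} (hα : 0 < α) :
    Integrable fun t : ℝ => |t| * Real.exp (-(α * t ^ 2)) := by
  refine (integrable_mul_exp_neg_mul_sq hα).abs.congr (.of_forall fun t => ?_)
  simp [abs_mul, neg_mul]

lemma integral_abs_mul_exp_neg_mul_sq {α : ℝ} (hα : 0 < α) :
    ∫ t : ℝ, |t| * Real.exp (-(α * t ^ 2)) = α⁻¹ := by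
  have hhalf := integral_rpow_mul_exp_neg_mul_rpow two_pos (by norm_num : (-1 : ℝ) < 1) hα
  norm_num [Real.rpow_neg_one] at hhalf
  have hsymm := integral_comp_abs (f := fun t => t * Real.exp (-(α * t ^ 2)))
  simp only [sq_abs] at hsymm
  rw [hsymm, hhalf]
  ring

section CStarAlgebra

variable {A : Type*} [CStarAlgebra A]

lemma exp_I_mul_smul_mem_unitary {a : A} (ha : IsSelfAdjoint a) (t : ℝ) :
    exp ((I * t) • a) ∈ unitary A := by
  let +nondep : NormedAlgebra ℚ A := .restrictScalars ℚ ℂ A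
  rw [mul_smul]
  exact exp_mem_unitary_of_mem_skewAdjoint
    (IsSelfAdjoint.smul (conj_ofReal t) ha |>.smul_mem_skewAdjoint conj_I)

lemma norm_exp_I_mul_smul_le_one {a : A} (ha : IsSelfAdjoint a) (t : ℝ) :
    ‖exp ((I * t) • a)‖ ≤ 1 := by
  rcases subsingleton_or_nontrivial A with _ | _
  · simp [Subsingleton.elim (exp ((I * t) • a)) 0]
  · exact (CStarRing.norm_of_mem_unitary (exp_I_mul_smul_mem_unitary ha t)).le

lemma hasDerivAt_exp_I_mul_smul (a : A) (s : ℝ) :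
    HasDerivAt (fun t : ℝ => exp ((I * t) • a)) (exp ((I * s) • a) * (I • a)) s := by
  have h := ((hasDerivAt_exp_smul_const (𝕂 := ℂ) (I • a) (s : ℂ)).hasFDerivAt.restrictScalars ℝ
    ).comp_hasDerivAt s ofRealCLM.hasDerivAt
  simpa [Function.comp_def, mul_comm I, mul_smul] using h

lemma hasDerivAt_exp_I_mul_smul' (a : A) (s : ℝ) :
    HasDerivAt (fun t : ℝ => exp ((I * t) • a)) ((I • a) * exp ((I * s) • a)) s := by
  have h := ((hasDerivAt_exp_smul_const' (𝕂 := ℂ) (I • a) (s : ℂ)).hasFDerivAt.restrictScalars ℝ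
    ).comp_hasDerivAt s ofRealCLM.hasDerivAt
  simpa [Function.comp_def, mul_comm I, mul_smul] using h

lemma norm_exp_I_mul_smul_sub_le {a b : A} (ha : IsSelfAdjoint a) (hb : IsSelfAdjoint b)
    (t : ℝ) : ‖exp ((I * t) • a) - exp ((I * t) • b)‖ ≤ |t| * ‖a - b‖ := by
  set U : ℝ → A := fun s => exp ((I * s) • b)
  set V : ℝ → A := fun s => exp ((I * s) • a)
  have hderiv : ∀ s, HasDerivAt (fun s => U (t - s) * V s) (U (t - s) * (I • (a - b)) * V s) s := by
    intro s
    have hU := (hasDerivAt_exp_I_mul_smul b (t - s)).scomp s ((hasDerivAt_id s).const_sub t)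
    refine (hU.mul (hasDerivAt_exp_I_mul_smul' a s)).congr_deriv ?_
    simp only [Function.comp_apply, neg_one_smul, smul_sub]
    noncomm_ring
  have hbound : ∀ s ∈ Set.uIcc 0 t, ‖U (t - s) * (I • (a - b)) * V s‖ ≤ ‖a - b‖ := by
    intro s _
    rw [CStarRing.norm_mul_mem_unitary _ (exp_I_mul_smul_mem_unitary ha s),
      CStarRing.norm_mem_unitary_mul _ (exp_I_mul_smul_mem_unitary hb _), norm_smul, norm_I,
      one_mul]
  have hmvt := (convex_uIcc 0 t).norm_image_sub_le_of_norm_hasDerivWithin_le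
    (fun s _ => (hderiv s).hasDerivWithinAt) hbound Set.left_mem_uIcc Set.right_mem_uIcc
  simpa [U, V, mul_comm |t|] using hmvt

/-- The paper's `𝒫_α` for `a = H` and `𝒫̃_α` for `a = M`. -/
noncomputable def gaussianAverage (α : ℝ) (a : A) : A :=
  Real.sqrt (α / Real.pi) • ∫ t : ℝ, Real.exp (-(α * t ^ 2)) • exp ((I * t) • a)

lemma integrable_exp_neg_mul_sq_smul_exp_I_mul_smul {a : A} (ha : IsSelfAdjoint a) {α : ℝ}
    (hα : 0 < α) : Integrable fun t : ℝ => Real.exp (-(α * t ^ 2)) • exp ((I * t) • a) := by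
  have hcont : Continuous fun t : ℝ => exp ((I * t) • a) :=
    continuous_iff_continuousAt.2 fun s => (hasDerivAt_exp_I_mul_smul a s).continuousAt
  refine (integrable_exp_neg_mul_sq hα).mono' (by fun_prop) (.of_forall fun t => ?_)
  rw [norm_smul, Real.norm_of_nonneg (Real.exp_pos _).le, neg_mul]
  exact mul_le_of_le_one_right (Real.exp_pos _).le (norm_exp_I_mul_smul_le_one ha t)

lemma norm_gaussianAverage_sub_le {a b : A} (ha : IsSelfAdjoint a) (hb : IsSelfAdjoint b)
    {α : ℝ} (hα : 0 < α) :
    ‖gaussianAverage α a - gaussianAverage α b‖ ≤ ‖a - b‖ / Real.sqrt (α * Real.pi) := by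
  have hint : ‖∫ t : ℝ, Real.exp (-(α * t ^ 2)) • (exp ((I * t) • a) - exp ((I * t) • b))‖
      ≤ ‖a - b‖ / α := by
    calc _ ≤ ∫ t : ℝ, ‖a - b‖ * (|t| * Real.exp (-(α * t ^ 2))) := by
          refine norm_integral_le_of_norm_le
            ((integrable_abs_mul_exp_neg_mul_sq hα).const_mul _) (.of_forall fun t => ?_)
          rw [norm_smul, Real.norm_of_nonneg (Real.exp_pos _).le]
          exact (mul_le_mul_of_nonneg_left (norm_exp_I_mul_smul_sub_le ha hb t)
            (Real.exp_pos _).le).trans_eq (by ring)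
      _ = ‖a - b‖ / α := by
          rw [integral_const_mul, integral_abs_mul_exp_neg_mul_sq hα, div_eq_mul_inv]
  have hsqrt : Real.sqrt (α / Real.pi) / α = 1 / Real.sqrt (α * Real.pi) := by
    rw [div_eq_div_iff (by positivity) (by positivity), one_mul,
      ← Real.sqrt_mul' _ (by positivity), show α / Real.pi * (α * Real.pi) = α * α by field_simp,
      Real.sqrt_mul_self hα.le]
  calc _ = Real.sqrt (α / Real.pi) *
        ‖∫ t : ℝ, Real.exp (-(α * t ^ 2)) • (exp ((I * t) • a) - exp ((I * t) • b))‖ := by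
        rw [gaussianAverage, gaussianAverage, ← smul_sub, ← integral_sub
          (integrable_exp_neg_mul_sq_smul_exp_I_mul_smul ha hα)
          (integrable_exp_neg_mul_sq_smul_exp_I_mul_smul hb hα), norm_smul,
          Real.norm_of_nonneg (Real.sqrt_nonneg _)]
        simp only [smul_sub]
    _ ≤ Real.sqrt (α / Real.pi) * (‖a - b‖ / α) := by gcongr
    _ = ‖a - b‖ / Real.sqrt (α * Real.pi) := by
        rw [mul_div_left_comm, hsqrt]; ring

end CStarAlgebra

lemma OrthonormalBasis.opNorm_le_of_apply_eq_smul {𝕜 E ι : Type*} [RCLike 𝕜]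
    [NormedAddCommGroup E] [InnerProductSpace 𝕜 E] [Fintype ι] (b : OrthonormalBasis ι 𝕜 E)
    (T : E →L[𝕜] E) {c : ι → 𝕜} {C : ℝ} (hC : 0 ≤ C) (hc : ∀ i, ‖c i‖ ≤ C)
    (hT : ∀ i, T (b i) = c i • b i) : ‖T‖ ≤ C := by
  refine T.opNorm_le_bound hC fun x => ?_
  have hcoord : ∀ i, ⟪b i, T x⟫_𝕜 = c i * ⟪b i, x⟫_𝕜 := by
    intro i
    conv_lhs => rw [← b.sum_repr' x]
    simp only [map_sum, map_smul, hT, smul_smul]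
    rw [b.orthonormal.inner_right_fintype, mul_comm]
  have hsq : ‖T x‖ ^ 2 ≤ (C * ‖x‖) ^ 2 := by
    rw [← b.sum_sq_norm_inner_right, mul_pow, ← b.sum_sq_norm_inner_right, Finset.mul_sum]
    refine Finset.sum_le_sum fun i _ => ?_
    rw [hcoord, norm_mul, mul_pow]
    gcongr
    exact hc i
  exact (pow_le_pow_iff_left₀ (norm_nonneg _) (by positivity) two_ne_zero).1 hsq

lemma ContinuousLinearMap.exp_apply_of_apply_eq_smul {E : Type*} [NormedAddCommGroup E]
    [NormedSpace ℂ E] [CompleteSpace E] (T : E →L[ℂ] E) {c : ℂ} {v : E} (hv : T v = c • v) :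
    exp T v = cexp c • v := by
  have hpow : ∀ n : ℕ, (T ^ n) v = c ^ n • v := by
    intro n
    induction n with
    | zero => simp
    | succ n ih =>
      rw [pow_succ']
      change T ((T ^ n) v) = _
      rw [ih, map_smul, hv, smul_smul, pow_succ]
  have hT := (exp_series_hasSum_exp' (𝕂 := ℂ) T).mapL (apply ℂ E v)
  have hc := (exp_series_hasSum_exp' (𝕂 := ℂ) c).smul_const v
  rw [← Complex.exp_eq_exp_ℂ] at hc
  refine hT.unique (hc.congr_fun fun n => ?_)
  simp [hpow, smul_smul]

section Operator

variable {E : Type*} [NormedAddCommGroup E] [InnerProductSpace ℂ E] [CompleteSpace E]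

lemma gaussianAverage_apply_of_apply_eq_smul {H : E →L[ℂ] E} (hH : IsSelfAdjoint H) {α : ℝ}
    (hα : 0 < α) {μ : ℝ} {v : E} (hv : H v = (μ : ℂ) • v) :
    gaussianAverage α H v = Real.exp (-(μ ^ 2 / (4 * α))) • v := by
  have hintegrand : ∀ t : ℝ, (Real.exp (-(α * t ^ 2)) • exp ((I * t) • H)) v
      = (cexp (I * μ * t) * cexp (-α * t ^ 2)) • v := by
    intro t
    have hvt : ((I * t) • H) v = (I * t * μ) • v := by
      rw [FunLike.coe_smul, Pi.smul_apply, hv, smul_smul]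
    rw [FunLike.coe_smul, Pi.smul_apply, ContinuousLinearMap.exp_apply_of_apply_eq_smul _ hvt,
      RCLike.real_smul_eq_coe_smul (K := ℂ), RCLike.ofReal_eq_complex_ofReal, smul_smul,
      Complex.ofReal_exp, ← Complex.exp_add, ← Complex.exp_add]
    congr 2
    push_cast
    ring
  have hsqrt : ((Real.pi : ℂ) / α) ^ (1 / 2 : ℂ) = (Real.sqrt (Real.pi / α) : ℂ) := by
    rw [Real.sqrt_eq_rpow, Complex.ofReal_cpow (by positivity)]
    push_cast
    rfl
  rw [gaussianAverage, FunLike.coe_smul, Pi.smul_apply, ContinuousLinearMap.integral_apply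
    (integrable_exp_neg_mul_sq_smul_exp_I_mul_smul hH hα)]
  simp_rw [hintegrand]
  rw [integral_smul_const, fourierIntegral_gaussian (by simpa using hα), hsqrt,
    RCLike.real_smul_eq_coe_smul (K := ℂ), RCLike.real_smul_eq_coe_smul (K := ℂ),
    RCLike.ofReal_eq_complex_ofReal, smul_smul, ← mul_assoc, ← Complex.ofReal_mul,
    ← Real.sqrt_mul (by positivity), div_mul_div_cancel₀ Real.pi_pos.ne', div_self hα.ne',
    Real.sqrt_one, Complex.ofReal_one, one_mul, Complex.ofReal_exp]
  congr 2
  push_cast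
  ring

lemma inner_smul_eq_ite_of_apply_eq_smul {H : E →L[ℂ] E} (hH : IsSelfAdjoint H) {ψ₀ : E}
    (hψ : ‖ψ₀‖ = 1) (hgs : H ψ₀ = 0) (hker : ∀ v : E, H v = 0 → ∃ c : ℂ, v = c • ψ₀) {μ : ℝ}
    {v : E} (hv : H v = (μ : ℂ) • v) : ⟪ψ₀, v⟫_ℂ • ψ₀ = if μ = 0 then v else 0 := by
  split_ifs with hμ
  · obtain ⟨c, rfl⟩ := hker v (by simp [hv, hμ])
    simp [inner_self_eq_norm_sq_to_K, hψ]
  · have h : (μ : ℂ) * ⟪ψ₀, v⟫_ℂ = 0 := by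
      have hsym := hH.isSymmetric ψ₀ v
      simp only [ContinuousLinearMap.coe_coe, hgs, inner_zero_left] at hsym
      rw [← inner_smul_right, ← hv, ← hsym]
    simp [(mul_eq_zero.1 h).resolve_left (by exact_mod_cast hμ)]

lemma norm_gaussianAverage_sub_le_of_spectralGap [FiniteDimensional ℂ E] {H P₀ : E →L[ℂ] E}
    (hH : IsSelfAdjoint H) {ψ₀ : E} (hψ : ‖ψ₀‖ = 1) (hgs : H ψ₀ = 0)
    (hker : ∀ v : E, H v = 0 → ∃ c : ℂ, v = c • ψ₀) {γ : ℝ} (hγ : 0 ≤ γ)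
    (hgap : ∀ μ : ℝ, Module.End.HasEigenvalue (H : E →ₗ[ℂ] E) (μ : ℂ) → μ = 0 ∨ γ ≤ μ)
    (hP₀ : ∀ x : E, P₀ x = ⟪ψ₀, x⟫_ℂ • ψ₀) {α : ℝ} (hα : 0 < α) :
    ‖gaussianAverage α H - P₀‖ ≤ Real.exp (-(γ ^ 2 / (4 * α))) := by
  have hsym := hH.isSymmetric
  set b := hsym.eigenvectorBasis rfl
  set μ := hsym.eigenvalues rfl
  have heig : ∀ i, H (b i) = (μ i : ℂ) • b i := hsym.apply_eigenvectorBasis rfl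
  refine b.opNorm_le_of_apply_eq_smul _
    (c := fun i => if μ i = 0 then 0 else (Real.exp (-(μ i ^ 2 / (4 * α))) : ℂ))
    (Real.exp_pos _).le (fun i => ?_) (fun i => ?_)
  · split_ifs with h
    · simpa using (Real.exp_pos _).le
    · have hγμ : γ ≤ μ i := (hgap _ (hsym.hasEigenvalue_eigenvalues rfl i)).resolve_left h
      rw [Complex.norm_real, Real.norm_of_nonneg (Real.exp_pos _).le]
      gcongr
  · rw [sub_apply, gaussianAverage_apply_of_apply_eq_smul hH hα (heig i), hP₀,
      inner_smul_eq_ite_of_apply_eq_smul hH hψ hgs hker (heig i)]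
    split_ifs with h <;> simp [h, RCLike.real_smul_eq_coe_smul (K := ℂ)]

end Operator

theorem stmt_18_general {E : Type*} [NormedAddCommGroup E] [InnerProductSpace ℂ E]
    [FiniteDimensional ℂ E] (H M P₀ : E →L[ℂ] E)
    (hH : IsSelfAdjoint H) (hM : IsSelfAdjoint M)
    (ψ₀ : E) (hψ : ‖ψ₀‖ = 1) (hgs : H ψ₀ = 0)
    (hker : ∀ v : E, H v = 0 → ∃ c : ℂ, v = c • ψ₀)
    (γ : ℝ) (hγ : 0 < γ)
    (hgap : ∀ μ : ℝ, Module.End.HasEigenvalue (H : E →ₗ[ℂ] E) (μ : ℂ) → μ = 0 ∨ γ ≤ μ)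
    (hP₀ : ∀ x : E, P₀ x = ⟪ψ₀, x⟫_ℂ • ψ₀)
    (η : ℝ) (hη : ‖H - M‖ ≤ η)
    (α : ℝ) (hα : 0 < α) :
    ‖Real.sqrt (α / Real.pi) •
        (∫ t : ℝ, Real.exp (-(α * t ^ 2)) • NormedSpace.exp ((Complex.I * t) • M))
      - P₀‖ ≤ η / Real.sqrt (α * Real.pi) + Real.exp (-(γ ^ 2 / (4 * α))) := by
  change ‖gaussianAverage α M - P₀‖ ≤ _
  have hperturb := norm_gaussianAverage_sub_le hM hH hα
  have hground := norm_gaussianAverage_sub_le_of_spectralGap hH hψ hgs hker hγ.le hgap hP₀ hα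
  have hη' : ‖M - H‖ / Real.sqrt (α * Real.pi) ≤ η / Real.sqrt (α * Real.pi) := by
    rw [norm_sub_rev]
    gcongr
  calc _ ≤ ‖gaussianAverage α M - gaussianAverage α H‖ + ‖gaussianAverage α H - P₀‖ :=
        norm_sub_le_norm_sub_add_norm_sub _ _ _
    _ ≤ _ := by linarith

theorem stmt_18 {E : Type*} [NormedAddCommGroup E] [InnerProductSpace ℂ E]
    [FiniteDimensional ℂ E] (H M P₀ : E →L[ℂ] E)
    (hH : IsSelfAdjoint H) (hM : IsSelfAdjoint M)
    (hpos : ∀ v : E, 0 ≤ (⟪v, H v⟫_ℂ).re)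
    (ψ₀ : E) (hψ : ‖ψ₀‖ = 1) (hgs : H ψ₀ = 0)
    (hker : ∀ v : E, H v = 0 → ∃ c : ℂ, v = c • ψ₀)
    (γ : ℝ) (hγ : 0 < γ)
    (hgap : ∀ μ : ℝ, Module.End.HasEigenvalue (H : E →ₗ[ℂ] E) (μ : ℂ) → μ = 0 ∨ γ ≤ μ)
    (hP₀ : ∀ x : E, P₀ x = ⟪ψ₀, x⟫_ℂ • ψ₀)
    (η : ℝ) (hη : ‖H - M‖ ≤ η)
    (α : ℝ) (hα : 0 < α) :
    ‖Real.sqrt (α / Real.pi) •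
        (∫ t : ℝ, Real.exp (-(α * t ^ 2)) • NormedSpace.exp ((Complex.I * t) • M))
      - P₀‖ ≤ η / Real.sqrt (α * Real.pi) + Real.exp (-(γ ^ 2 / (4 * α))) :=
  stmt_18_general H M P₀ hH hM ψ₀ hψ hgs hker γ hγ hgap hP₀ η hη α hα
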